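/- Fix real numbers a₀, a₁, b₀, b₁ and training data x¹, …, x^N ∈ ℝ^n, y¹, …, y^N ∈ ℝ. On the convex set D = {(W, b) ∈ ℝ^n × ℝ | b₀ + b₁(⟨W, xⁱ⟩ + b) > 0 for all i = 1..N}, the loss function L(W, b) = max_{i=1..N} | yⁱ − (a₀ + a₁(⟨W, xⁱ⟩ + b))/(b₀ + b₁(⟨W, xⁱ⟩ + b)) | is quasiconvex. -/

import Mathlib

/-!
For fixed `i`, numerator and denominator are affine in `(W, b)`. Where the denominator is
positive, `num / den ≤ r` iff `num - r • den ≤ 0`, so every sublevel and superlevel set of the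
ratio is cut out by an affine inequality: the ratio is quasilinear. Then `|yⁱ - num / den| ≤ r`
is a superlevel set intersected with a sublevel set, and the sublevel sets of a finite maximum
are intersections.
-/

open RealInnerProductSpace

section Quasiconvex

variable {𝕜 E β ι : Type*} [Semiring 𝕜] [PartialOrder 𝕜] [AddCommMonoid E] [SMul 𝕜 E]
  {s : Set E}

theorem QuasilinearOn.quasiconvexOn_abs_sub [AddCommGroup β] [LinearOrder β]
    [IsOrderedAddMonoid β] {f : E → β} (hf : QuasilinearOn 𝕜 s f) (c : β) :
    QuasiconvexOn 𝕜 s fun x => |c - f x| := by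
  intro r
  have hsub : {x | x ∈ s ∧ |c - f x| ≤ r} =
      {x | x ∈ s ∧ c - r ≤ f x} ∩ {x | x ∈ s ∧ f x ≤ c + r} := by
    ext x
    simp only [Set.mem_ofPred_eq, Set.mem_inter_iff, abs_sub_le_iff, sub_le_comm,
      sub_le_iff_le_add']
    tauto
  exact hsub ▸ (hf.2 _).inter (hf.1 _)

theorem QuasiconvexOn.finset_sup' [SemilatticeSup β] {t : Finset ι} (ht : t.Nonempty)
    {f : ι → E → β} (hf : ∀ i ∈ t, QuasiconvexOn 𝕜 s (f i)) :
    QuasiconvexOn 𝕜 s fun x => t.sup' ht fun i => f i x := by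
  intro r
  have hsub : {x | x ∈ s ∧ t.sup' ht (fun i => f i x) ≤ r} =
      ⋂ i ∈ t, {x | x ∈ s ∧ f i x ≤ r} := by
    ext x
    simp only [Set.mem_ofPred_eq, Set.mem_iInter, Finset.sup'_le_iff]
    exact ⟨fun ⟨hx, hle⟩ i hi => ⟨hx, hle i hi⟩,
      fun h => ⟨(h _ ht.choose_spec).1, fun i hi => (h i hi).2⟩⟩
  exact hsub ▸ convex_iInter₂ fun i hi => hf i hi r

end Quasiconvex

theorem quasilinearOn_div {𝕜 E : Type*} [Field 𝕜] [LinearOrder 𝕜] [IsStrictOrderedRing 𝕜]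
    [AddCommGroup E] [Module 𝕜 E] {s : Set E} (f g : E →ᵃ[𝕜] 𝕜) (hs : Convex 𝕜 s)
    (hg : ∀ x ∈ s, 0 < g x) : QuasilinearOn 𝕜 s fun x => f x / g x := by
  constructor
  · intro r
    have hsub : {x | x ∈ s ∧ f x / g x ≤ r} = s ∩ (f - r • g) ⁻¹' Set.Iic 0 := by
      ext x
      simp only [Set.mem_ofPred_eq, Set.mem_inter_iff, Set.mem_preimage, Set.mem_Iic,
        AffineMap.coe_sub, AffineMap.coe_smul, Pi.sub_apply, Pi.smul_apply, smul_eq_mul]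
      exact and_congr_right fun hx => (div_le_iff₀ (hg x hx)).trans sub_nonpos.symm
    exact hsub ▸ hs.inter ((convex_Iic 0).affine_preimage _)
  · intro r
    have hsub : {x | x ∈ s ∧ r ≤ f x / g x} = s ∩ (f - r • g) ⁻¹' Set.Ici 0 := by
      ext x
      simp only [Set.mem_ofPred_eq, Set.mem_inter_iff, Set.mem_preimage, Set.mem_Ici,
        AffineMap.coe_sub, AffineMap.coe_smul, Pi.sub_apply, Pi.smul_apply, smul_eq_mul]
      exact and_congr_right fun hx => (le_div_iff₀ (hg x hx)).trans sub_nonneg.symm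
    exact hsub ▸ hs.inter ((convex_Ici 0).affine_preimage _)

noncomputable def preactivation {F : Type*} [NormedAddCommGroup F] [InnerProductSpace ℝ F]
    (v : F) : F × ℝ →ᵃ[ℝ] ℝ :=
  (((innerₗ F).flip v).comp (LinearMap.fst ℝ F ℝ) + LinearMap.snd ℝ F ℝ).toAffineMap

theorem stmt_7_general {n N : ℕ} (a₀ a₁ b₀ b₁ : ℝ)
    (x : Fin N → EuclideanSpace ℝ (Fin n)) (y : Fin N → ℝ)
    (hne : (Finset.univ : Finset (Fin N)).Nonempty)
    (D : Set (EuclideanSpace ℝ (Fin n) × ℝ))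
    (hD : D = {p | ∀ i, b₀ + b₁ * (⟪p.1, x i⟫ + p.2) > 0})
    (L : EuclideanSpace ℝ (Fin n) × ℝ → ℝ)
    (hL : ∀ p, L p = Finset.univ.sup' hne (fun i =>
        |y i - (a₀ + a₁ * (⟪p.1, x i⟫ + p.2)) / (b₀ + b₁ * (⟪p.1, x i⟫ + p.2))|)) :
    Convex ℝ D ∧
    ∀ p ∈ D, ∀ q ∈ D, ∀ t ∈ Set.Icc (0 : ℝ) 1,
      L (t • p + (1 - t) • q) ≤ max (L p) (L q) := by
  let num (i : Fin N) := AffineMap.const ℝ _ a₀ + a₁ • preactivation (x i)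
  let den (i : Fin N) := AffineMap.const ℝ _ b₀ + b₁ • preactivation (x i)
  have hDconv : Convex ℝ D := by
    rw [hD, Set.ofPred_forall]
    exact convex_iInter fun i => (convex_Ioi 0).affine_preimage (den i)
  have hden : ∀ i, ∀ p ∈ D, 0 < den i p := by
    rw [hD]
    exact fun i p hp => hp i
  have hquasi : QuasiconvexOn ℝ D L := by
    rw [funext hL]
    refine QuasiconvexOn.finset_sup' hne fun i _ => ?_
    exact (quasilinearOn_div (num i) (den i) hDconv (hden i)).quasiconvexOn_abs_sub (y i)
  obtain ⟨-, hle⟩ := quasiconvexOn_iff_le_max.1 hquasi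
  exact ⟨hDconv, fun p hp q hq t ⟨ht0, ht1⟩ =>
    hle hp hq ht0 (sub_nonneg.2 ht1) (add_sub_cancel t 1)⟩

/-- Theorem 1 of the paper: with fixed rational-activation coefficients
`a₀, a₁, b₀, b₁` and training data `(xⁱ, yⁱ)`, the uniform loss
`L(W,b) = maxᵢ |yⁱ - (a₀ + a₁(⟪W,xⁱ⟫+b))/(b₀ + b₁(⟪W,xⁱ⟫+b))|`
is quasiconvex on the convex set where all denominators are positive. -/
theorem stmt_7 {n N : ℕ} (hN : 0 < N) (a₀ a₁ b₀ b₁ : ℝ)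
    (x : Fin N → EuclideanSpace ℝ (Fin n)) (y : Fin N → ℝ)
    (hne : (Finset.univ : Finset (Fin N)).Nonempty)
    (D : Set (EuclideanSpace ℝ (Fin n) × ℝ))
    (hD : D = {p | ∀ i, b₀ + b₁ * (⟪p.1, x i⟫ + p.2) > 0})
    (L : EuclideanSpace ℝ (Fin n) × ℝ → ℝ)
    (hL : ∀ p, L p = Finset.univ.sup' hne (fun i =>
        |y i - (a₀ + a₁ * (⟪p.1, x i⟫ + p.2)) / (b₀ + b₁ * (⟪p.1, x i⟫ + p.2))|)) :
    Convex ℝ D ∧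
    ∀ p ∈ D, ∀ q ∈ D, ∀ t ∈ Set.Icc (0 : ℝ) 1,
      L (t • p + (1 - t) • q) ≤ max (L p) (L q) :=
  stmt_7_general a₀ a₁ b₀ b₁ x y hne D hD L hL
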